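/- arXiv:1309.4826 — 4 statements merged into one kernel-verified Lean document; each statement's English description precedes it below -/
import Mathlib

section
/- Let f = A_2 x^2 + A_1 x + A_0 be an integer polynomial with A_0 A_1 A_2 ≠ 0 that satisfies Dumas's criterion for some prime p (i.e., the Newton diagram of f with respect to p is a single segment with no interior lattice points). Then the coefficients A_0, A_1, A_2 are not pairwise coprime: gcd(A_j, A_k) ≠ 1 for some distinct j, k ∈ {0,1,2}. -/
open Filter Polynomial Topology

/-- The `p`-adic valuation of an integer, as an integer. -/
noncomputable def vp (p : ℕ) (m : ℤ) : ℤ := (padicValInt p m : ℤ)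

/-- Dumas's criterion for `∑ A i * X^i` (degree `n`) with respect to `p`: the Newton diagram
is a single segment from `(0, v_p(A 0))` to `(n, v_p(A n))` containing no lattice points other
than its endpoints; i.e. all middle points `(i, v_p(A i))` lie on or above the line through the
endpoints, and the open segment contains no lattice point. -/
def DumasAt (p n : ℕ) (A : ℕ → ℤ) : Prop :=
  A 0 ≠ 0 ∧ A n ≠ 0 ∧
  (∀ i : ℕ, 0 < i → i < n → A i ≠ 0 →
    (n : ℤ) * vp p (A i) ≥ ((n : ℤ) - (i : ℤ)) * vp p (A 0) + (i : ℤ) * vp p (A n)) ∧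
  ¬ ∃ x y : ℤ, 0 < x ∧ x < (n : ℤ) ∧
    (n : ℤ) * y = ((n : ℤ) - x) * vp p (A 0) + x * vp p (A n)

/-- The Riemann zeta function at a natural number argument, `ζ(k) = ∑_{m ≥ 1} 1/m^k`. -/
noncomputable def zetaR (k : ℕ) : ℝ := ∑' m : ℕ, (1 : ℝ) / ((m : ℝ) + 1) ^ k

/-- The product `∏_p (1 - 1/p)^2 (1 + 2/p)` over all primes. -/
noncomputable def primeProd : ℝ :=
  ∏' p : Nat.Primes, (1 - 1 / ((p : ℕ) : ℝ)) ^ 2 * (1 + 2 / ((p : ℕ) : ℝ))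

/-- `Dcount n H`: number of degree-`n` integer polynomials of height at most `H`
satisfying Dumas's criterion with respect to some prime. -/
noncomputable def Dcount (n H : ℕ) : ℕ :=
  Set.ncard {A : ℕ → ℤ | A n ≠ 0 ∧ (∀ i, (A i).natAbs ≤ H) ∧ (∀ i, n < i → A i = 0) ∧
    ∃ p : ℕ, p.Prime ∧ DumasAt p n A}

/-- `Pcount n H`: number of degree-`n` integer polynomials of height at most `H`. -/
noncomputable def Pcount (n H : ℕ) : ℕ :=
  Set.ncard {A : ℕ → ℤ | A n ≠ 0 ∧ (∀ i, (A i).natAbs ≤ H) ∧ (∀ i, n < i → A i = 0)}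

/-
Dumas's criterion for `n = 2` says that `(1, (v_p(A₀) + v_p(A₂))/2)` is not a lattice point, so
`v_p(A₀) ≠ v_p(A₂)` and `p` divides `A₀` or `A₂`. The middle point `(1, v_p(A₁))` lies on or above
the segment, whose midpoint then has positive height, so `p` divides `A₁` as well.
-/

lemma vp_nonneg (p : ℕ) (m : ℤ) : 0 ≤ vp p m := Int.natCast_nonneg _

lemma dvd_of_vp_pos {p : ℕ} {m : ℤ} (hm : 0 < vp p m) : (p : ℤ) ∣ m := by
  by_contra hpm
  simp [vp, padicValInt.eq_zero_of_not_dvd hpm] at hm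

lemma Int.gcd_ne_one_of_prime_dvd {p : ℕ} (hp : p.Prime) {a b : ℤ} (ha : (p : ℤ) ∣ a)
    (hb : (p : ℤ) ∣ b) : Int.gcd a b ≠ 1 := fun hab =>
  (Nat.prime_iff_prime_int.mp hp).not_isUnit
    ((Int.isCoprime_iff_gcd_eq_one.mpr hab).isUnit_of_dvd' ha hb)

namespace DumasAt

variable {p n : ℕ} {A : ℕ → ℤ}

/-- Otherwise `(1, v_p(A 0))` would be a lattice point inside the segment. -/
lemma vp_zero_ne_vp_deg (hd : DumasAt p n A) (hn : 1 < n) : vp p (A 0) ≠ vp p (A n) := by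
  intro heq
  exact hd.2.2.2 ⟨1, vp p (A 0), one_pos, by exact_mod_cast hn, by rw [← heq]; ring⟩

lemma vp_zero_pos_or_vp_deg_pos (hd : DumasAt p n A) (hn : 1 < n) :
    0 < vp p (A 0) ∨ 0 < vp p (A n) := by
  have h0 := vp_nonneg p (A 0)
  have hn' := vp_nonneg p (A n)
  have hne := hd.vp_zero_ne_vp_deg hn
  omega

lemma vp_pos_of_lt {i : ℕ} (hd : DumasAt p n A) (hi : 0 < i) (hin : i < n) (hAi : A i ≠ 0) :
    0 < vp p (A i) := by
  have hbelow := hd.2.2.1 i hi hin hAi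
  have hni : (0 : ℤ) < n - i := by omega
  have hi' : (0 : ℤ) < i := by exact_mod_cast hi
  have hendpoints : 0 < ((n : ℤ) - i) * vp p (A 0) + i * vp p (A n) := by
    rcases hd.vp_zero_pos_or_vp_deg_pos (by omega) with h0 | h0
    · nlinarith [vp_nonneg p (A n)]
    · nlinarith [vp_nonneg p (A 0)]
  exact pos_of_mul_pos_right (hendpoints.trans_le hbelow) (Int.natCast_nonneg n)

end DumasAt

theorem stmt_1 (A : ℕ → ℤ) (h : A 0 * A 1 * A 2 ≠ 0) (p : ℕ) (hp : p.Prime)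
    (hd : DumasAt p 2 A) :
    ¬ (Int.gcd (A 0) (A 1) = 1 ∧ Int.gcd (A 0) (A 2) = 1 ∧ Int.gcd (A 1) (A 2) = 1) := by
  have hA1 : A 1 ≠ 0 := fun h1 => h (by rw [h1]; ring)
  have hp1 : (p : ℤ) ∣ A 1 := dvd_of_vp_pos (hd.vp_pos_of_lt one_pos one_lt_two hA1)
  rintro ⟨h01, -, h12⟩
  rcases hd.vp_zero_pos_or_vp_deg_pos one_lt_two with h0 | h2
  · exact Int.gcd_ne_one_of_prime_dvd hp (dvd_of_vp_pos h0) hp1 h01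
  · exact Int.gcd_ne_one_of_prime_dvd hp hp1 (dvd_of_vp_pos h2) h12
end

section
/- The number of triples (A_0, A_1, A_2) of integers with 1 ≤ A_0, A_1, A_2 ≤ H that are pairwise coprime equals H^3 · ∏_p (1 − 1/p)^2 (1 + 2/p) + O(H^2 (log H)^2), where the product runs over all primes. -/
open Filter Polynomial Topology

/-!
Sum over the third coordinate first. For coprime `a, b` the number of `c ≤ H` coprime to `ab` is
`H φ(ab)/(ab) + O(τ(ab))`, so the count is `H S(H) + O((H log H)²)` with
`S(H) = ∑_{a, b ≤ H, (a, b) = 1} φ(a) φ(b) / (ab)`. Möbius inversion of `(a, b) = 1` gives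
`S(H) = ∑_{d ≤ H} μ(d) U_d²` with `U_d = ∑_{d ∣ a ≤ H} φ(a)/a`, and a second Möbius inversion gives
`U_d = (H/d) ζ(2)⁻¹ d/ψ(d) + O(log H)`. Hence `S(H) = H² ζ(2)⁻² ∑_{d ≤ H} μ(d) (ψ(d))⁻² + O(H log² H)`,
and completing the series costs `O(H)`. Its Euler factors are `1 - (p + 1)⁻²`, and
`(1 - p⁻²)² (1 - (p + 1)⁻²) = (1 - 1/p)² (1 + 2/p)`.
-/

open Finset ArithmeticFunction
open scoped ArithmeticFunction.Moebius

namespace ArithmeticFunction.IsMultiplicative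

theorem sum_divisors_eq_prod_primeFactors {R : Type*} [CommSemiring R]
    {f : ArithmeticFunction R} (hf : f.IsMultiplicative)
    (hf_pow : ∀ p k, p.Prime → 2 ≤ k → f (p ^ k) = 0) {m : ℕ} (hm : m ≠ 0) :
    ∑ e ∈ m.divisors, f e = ∏ p ∈ m.primeFactors, (1 + f p) := by
  rw [← coe_mul_zeta_apply,
    (hf.mul isMultiplicative_zeta.natCast).multiplicative_factorization _ hm, Finsupp.prod,
    Nat.support_factorization]
  refine prod_congr rfl fun p hp => ?_
  have hp' := Nat.prime_of_mem_primeFactors hp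
  obtain ⟨k, hk⟩ : ∃ k, m.factorization p = k + 1 :=
    Nat.exists_eq_add_one.mpr (hp'.factorization_pos_of_dvd hm (Nat.dvd_of_mem_primeFactors hp))
  rw [hk, coe_mul_zeta_apply, Nat.sum_divisors_prime_pow hp', sum_range_succ', sum_range_succ',
    sum_eq_zero fun i _ => hf_pow p (i + 1 + 1) hp' (by omega)]
  simp [hf.map_one, add_comm]

theorem moebius_mul_apply_prime_pow {R : Type*} [CommRing R] (f : ArithmeticFunction R)
    {p k : ℕ} (hp : p.Prime) (hk : 2 ≤ k) : (μ (p ^ k) : R) * f (p ^ k) = 0 := by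
  simp [moebius_apply_prime_pow hp (by omega : k ≠ 0), show k ≠ 1 by omega]

theorem sum_divisors_moebius_mul {R : Type*} [CommRing R]
    {f : ArithmeticFunction R} (hf : f.IsMultiplicative) {m : ℕ} (hm : m ≠ 0) :
    ∑ e ∈ m.divisors, (μ e : R) * f e = ∏ p ∈ m.primeFactors, (1 - f p) := by
  have key := (isMultiplicative_moebius.intCast.pmul hf).sum_divisors_eq_prod_primeFactors
    (fun p k hp hk => by
      simpa [pmul_apply, intCoe_apply] using moebius_mul_apply_prime_pow f hp hk) hm
  simp only [pmul_apply, intCoe_apply] at key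
  rw [key]
  refine prod_congr rfl fun p hp => ?_
  simp [moebius_apply_prime (Nat.prime_of_mem_primeFactors hp), sub_eq_add_neg]

theorem hasProd_one_sub {R : Type*} [NormedCommRing R] [CompleteSpace R]
    {f : ArithmeticFunction R} (hf : f.IsMultiplicative)
    (hsum : Summable fun n => ‖(μ n : R) * f n‖) :
    HasProd (fun p : Nat.Primes => 1 - f p) (∑' n, (μ n : R) * f n) := by
  have key := (isMultiplicative_moebius.intCast.pmul hf).eulerProduct_hasProd
    (by simpa only [pmul_apply, intCoe_apply] using hsum)
  simp only [pmul_apply, intCoe_apply] at key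
  convert key using 2 with p
  rw [tsum_eq_sum (s := range 2) fun k hk =>
    moebius_mul_apply_prime_pow f p.prop (by simp at hk; omega), sum_range_succ, sum_range_one]
  simp [moebius_apply_prime p.prop, hf.map_one, sub_eq_add_neg]

end ArithmeticFunction.IsMultiplicative

namespace PairwiseCoprimeTriples

theorem sum_divisors_moebius_eq_ite {R : Type*} [Ring R] (n : ℕ) :
    ∑ e ∈ n.divisors, (μ e : R) = if n = 1 then 1 else 0 := by
  have h := congrArg (· n) (coe_moebius_mul_coe_zeta (R := R))
  simp only [coe_mul_zeta_apply, intCoe_apply, one_apply] at h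
  exact h

theorem abs_natDiv_sub_div_le_one (H e : ℕ) : |((H / e : ℕ) : ℝ) - H / e| ≤ 1 := by
  rw [← Nat.floor_div_eq_div (K := ℝ), abs_sub_comm, abs_of_nonneg (sub_nonneg.mpr
    (Nat.floor_le (by positivity)))]
  linarith [Nat.lt_floor_add_one ((H : ℝ) / e)]

theorem abs_sum_mul_natDiv_sub_le (s : Finset ℕ) {a b : ℕ → ℝ}
    (hab : ∀ e ∈ s, |a e| ≤ b e) (H : ℕ) :
    |∑ e ∈ s, a e * ((H / e : ℕ) : ℝ) - H * ∑ e ∈ s, a e / e| ≤ ∑ e ∈ s, b e := by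
  rw [mul_sum, ← sum_sub_distrib]
  refine (abs_sum_le_sum_abs _ _).trans (sum_le_sum fun e he => ?_)
  calc |a e * ((H / e : ℕ) : ℝ) - H * (a e / e)| = |a e| * |((H / e : ℕ) : ℝ) - H / e| := by
        rw [← abs_mul]; ring_nf
    _ ≤ b e * 1 := by gcongr; exacts [(abs_nonneg _).trans (hab e he), hab e he,
        abs_natDiv_sub_div_le_one H e]
    _ = b e := mul_one _

theorem sum_Icc_inv_le_one_add_log (M : ℕ) :
    ∑ e ∈ Icc 1 M, (e : ℝ)⁻¹ ≤ 1 + Real.log M := by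
  simpa [harmonic_eq_sum_Icc] using harmonic_le_one_add_log M

theorem card_filter_dvd_Icc (H e : ℕ) : #{a ∈ Icc 1 H | e ∣ a} = H / e := by
  rw [← Nat.Ioc_filter_dvd_card_eq_div, ← Icc_add_one_left_eq_Ioc, zero_add]

theorem divisors_eq_filter_dvd_Icc {m H : ℕ} (hm : m ∈ Icc 1 H) :
    m.divisors = {e ∈ Icc 1 H | e ∣ m} := by
  rw [mem_Icc] at hm
  ext e
  simp only [Nat.mem_divisors, mem_filter, mem_Icc]
  constructor
  · rintro ⟨he, -⟩
    exact ⟨⟨Nat.pos_of_dvd_of_pos he (by omega), (Nat.le_of_dvd (by omega) he).trans hm.2⟩,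
      he⟩
  · rintro ⟨-, he⟩
    exact ⟨he, by omega⟩

theorem sum_Icc_sum_divisors {R : Type*} [Semiring R] (F : ℕ → R) (M : ℕ) :
    ∑ m ∈ Icc 1 M, ∑ e ∈ m.divisors, F e =
      ∑ e ∈ Icc 1 M, F e * ((M / e : ℕ) : R) := by
  rw [sum_congr rfl fun m hm => by rw [divisors_eq_filter_dvd_Icc hm, sum_filter], sum_comm]
  refine sum_congr rfl fun e _ => ?_
  rw [← sum_filter, sum_const, card_filter_dvd_Icc, nsmul_eq_mul, Nat.cast_comm]

theorem sum_Icc_card_divisors_le (H : ℕ) :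
    ∑ a ∈ Icc 1 H, (#a.divisors : ℝ) ≤ H * (1 + Real.log H) := by
  have h := sum_Icc_sum_divisors (fun _ => (1 : ℝ)) H
  simp only [sum_const, nsmul_eq_mul, mul_one, one_mul] at h
  calc ∑ a ∈ Icc 1 H, (#a.divisors : ℝ) = ∑ e ∈ Icc 1 H, ((H / e : ℕ) : ℝ) := h
    _ ≤ ∑ e ∈ Icc 1 H, (H : ℝ) * (e : ℝ)⁻¹ := sum_le_sum fun e _ => Nat.cast_div_le
    _ ≤ H * (1 + Real.log H) := by
      rw [← mul_sum]; gcongr; exact sum_Icc_inv_le_one_add_log H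

theorem sum_filter_dvd_Icc {R : Type*} [AddCommMonoid R] (φ : ℕ → R) {d : ℕ} (hd : 0 < d)
    (H : ℕ) : ∑ a ∈ Icc 1 H with d ∣ a, φ a = ∑ m ∈ Icc 1 (H / d), φ (d * m) := by
  symm
  refine sum_nbij' (d * ·) (· / d) (fun m hm => ?_) (fun a ha => ?_) (fun m _ => ?_)
    (fun a ha => ?_) (fun _ _ => rfl) <;> simp only [mem_filter, mem_Icc] at *
  · exact ⟨⟨by nlinarith, (Nat.mul_le_mul_left d hm.2).trans (Nat.mul_div_le H d)⟩,
      dvd_mul_right d m⟩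
  · exact ⟨Nat.div_pos (Nat.le_of_dvd (by omega) ha.2) hd, Nat.div_le_div_right ha.1.2⟩
  · exact Nat.mul_div_cancel_left _ hd
  · exact Nat.mul_div_cancel' ha.2

theorem summable_of_abs_le_inv_sq {f : ℕ → ℝ} (hf : ∀ e, |f e| ≤ ((e : ℝ) ^ 2)⁻¹) :
    Summable fun e => ‖f e‖ :=
  .of_nonneg_of_le (fun _ => norm_nonneg _) hf
    (Real.summable_nat_pow_inv.mpr one_lt_two)

theorem abs_tsum_sub_sum_Icc_le {f : ℕ → ℝ} (hf : ∀ e, |f e| ≤ ((e : ℝ) ^ 2)⁻¹)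
    (hf0 : f 0 = 0) (M : ℕ) : |∑' e, f e - ∑ e ∈ Icc 1 M, f e| ≤ 2 / (M + 1) := by
  have htail : ∀ n, M + 1 ≤ n →
      |∑ e ∈ range n, f e - ∑ e ∈ Icc 1 M, f e| ≤ 2 / (M + 1) := fun n hn => by
    rw [range_eq_Ico, ← sum_Ico_consecutive f (Nat.zero_le _) hn,
      sum_eq_sum_Ico_succ_bot (Nat.succ_pos M), hf0, zero_add, zero_add, Nat.succ_eq_add_one,
      Ico_add_one_right_eq_Icc, Ico_add_one_left_eq_Ioo, add_sub_cancel_left]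
    calc |∑ e ∈ Ioo M n, f e| ≤ ∑ e ∈ Ioo M n, ((e : ℝ) ^ 2)⁻¹ :=
          (abs_sum_le_sum_abs _ _).trans (sum_le_sum fun e _ => hf e)
      _ ≤ 2 / (M + 1) := sum_Ioo_inv_sq_le M n
  have hlim := (((summable_of_abs_le_inv_sq hf).of_norm.hasSum.tendsto_sum_nat).sub_const
    (∑ e ∈ Icc 1 M, f e)).abs
  exact le_of_tendsto hlim (eventually_atTop.mpr ⟨M + 1, htail⟩)

noncomputable def coprimeInv (d : ℕ) : ArithmeticFunction ℝ :=
  ⟨fun e => if e.Coprime d then (e : ℝ)⁻¹ else 0, by simp⟩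

theorem coprimeInv_apply (d e : ℕ) : coprimeInv d e = if e.Coprime d then (e : ℝ)⁻¹ else 0 :=
  rfl

theorem isMultiplicative_coprimeInv (d : ℕ) : (coprimeInv d).IsMultiplicative := by
  refine ⟨by simp [coprimeInv_apply], fun {m n} _ => ?_⟩
  simp only [coprimeInv_apply, Nat.coprime_mul_iff_left, Nat.cast_mul, mul_inv]
  split_ifs <;> simp_all

theorem coprimeInv_apply_prime (d : ℕ) {p : ℕ} (hp : p.Prime) :
    coprimeInv d p = if p ∣ d then 0 else (p : ℝ)⁻¹ := by
  by_cases h : p ∣ d <;> simp [coprimeInv_apply, hp.coprime_iff_not_dvd, h]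

theorem coprimeInv_one (e : ℕ) : coprimeInv 1 e = (e : ℝ)⁻¹ := by
  simp [coprimeInv_apply]

theorem abs_coprimeInv_le (d e : ℕ) : |coprimeInv d e| ≤ (e : ℝ)⁻¹ := by
  rw [coprimeInv_apply]
  split_ifs <;> simp

theorem coprimeInv_div_self (d e : ℕ) : coprimeInv d e / e = coprimeInv d e ^ 2 := by
  rw [coprimeInv_apply]
  split_ifs <;> simp [div_eq_mul_inv, sq]

theorem abs_moebius_mul_le (e : ℕ) (x : ℝ) : |(μ e : ℝ) * x| ≤ |x| := by
  rw [abs_mul]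
  exact mul_le_of_le_one_left (abs_nonneg x) (by exact_mod_cast abs_moebius_le_one)

theorem abs_moebius_mul_coprimeInv_le (d e : ℕ) :
    |(μ e : ℝ) * coprimeInv d e| ≤ (e : ℝ)⁻¹ :=
  (abs_moebius_mul_le e _).trans (abs_coprimeInv_le d e)

theorem abs_moebius_mul_coprimeInv_sq_le (d e : ℕ) :
    |(μ e : ℝ) * coprimeInv d e ^ 2| ≤ ((e : ℝ) ^ 2)⁻¹ := by
  refine (abs_moebius_mul_le e _).trans ?_
  rw [abs_pow, ← inv_pow]
  exact pow_le_pow_left₀ (abs_nonneg _) (abs_coprimeInv_le d e) 2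

theorem inv_le_one_of_mem_primeFactors {m p : ℕ} (hp : p ∈ m.primeFactors) :
    (p : ℝ)⁻¹ ≤ 1 :=
  inv_le_one_of_one_le₀ (by exact_mod_cast (Nat.prime_of_mem_primeFactors hp).one_le)

noncomputable def totientRatio (m : ℕ) : ℝ := ∏ p ∈ m.primeFactors, (1 - (p : ℝ)⁻¹)

theorem totientRatio_nonneg (m : ℕ) : 0 ≤ totientRatio m :=
  prod_nonneg fun _ hp => sub_nonneg.mpr (inv_le_one_of_mem_primeFactors hp)

theorem totientRatio_le_one (m : ℕ) : totientRatio m ≤ 1 :=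
  prod_le_one (fun _ hp => sub_nonneg.mpr (inv_le_one_of_mem_primeFactors hp))
    fun _ _ => sub_le_self _ (by positivity)

theorem totientRatio_mul_of_coprime {a b : ℕ} (ha : a ≠ 0) (hb : b ≠ 0) (h : a.Coprime b) :
    totientRatio (a * b) = totientRatio a * totientRatio b := by
  rw [totientRatio, Nat.primeFactors_mul ha hb, prod_union h.disjoint_primeFactors]; rfl

theorem totientRatio_mul {d m : ℕ} (hd : d ≠ 0) (hm : m ≠ 0) :
    totientRatio (d * m) =
      totientRatio d * ∑ e ∈ m.divisors, (μ e : ℝ) * coprimeInv d e := by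
  have hsdiff : m.primeFactors \ d.primeFactors = {p ∈ m.primeFactors | ¬p ∣ d} := by
    ext p
    simp only [Finset.mem_sdiff, mem_filter, Nat.mem_primeFactors]
    exact ⟨fun ⟨hp, h⟩ => ⟨hp, fun hpd => h ⟨hp.1, hpd, hd⟩⟩,
      fun ⟨hp, h⟩ => ⟨hp, fun h' => h h'.2.1⟩⟩
  rw [(isMultiplicative_coprimeInv d).sum_divisors_moebius_mul hm, totientRatio,
    Nat.primeFactors_mul hd hm, ← union_sdiff_self_eq_union, prod_union disjoint_sdiff, hsdiff,
    prod_filter, totientRatio]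
  congr 1
  refine prod_congr rfl fun p hp => ?_
  rw [coprimeInv_apply_prime d (Nat.prime_of_mem_primeFactors hp)]
  split_ifs <;> simp

theorem totientRatio_eq_sum_divisors {m : ℕ} (hm : m ≠ 0) :
    totientRatio m = ∑ e ∈ m.divisors, (μ e : ℝ) / e := by
  simpa [totientRatio, coprimeInv_one, div_eq_mul_inv] using totientRatio_mul one_ne_zero hm

/-- `∏_{p ∤ d} (1 - p⁻²)`, the Euler product of `ζ(2)⁻¹` without its factors at `p ∣ d`. -/
noncomputable def invZetaTwoAway (d : ℕ) : ℝ := ∑' e, (μ e : ℝ) * coprimeInv d e ^ 2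

theorem hasProd_invZetaTwoAway (d : ℕ) :
    HasProd (fun p : Nat.Primes => 1 - coprimeInv d p ^ 2) (invZetaTwoAway d) := by
  have h := (isMultiplicative_coprimeInv d).ppow (k := 2) |>.hasProd_one_sub (by
    simpa only [ppow_apply two_pos, Real.norm_eq_abs] using
      summable_of_abs_le_inv_sq (abs_moebius_mul_coprimeInv_sq_le d))
  simp only [ppow_apply two_pos] at h
  exact h

theorem abs_invZetaTwoAway_sub_sum_le (d M : ℕ) :
    |invZetaTwoAway d - ∑ e ∈ Icc 1 M, (μ e : ℝ) * coprimeInv d e ^ 2| ≤ 2 / (M + 1) :=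
  abs_tsum_sub_sum_Icc_le (abs_moebius_mul_coprimeInv_sq_le d) (by simp) M

theorem abs_invZetaTwoAway_le (d : ℕ) : |invZetaTwoAway d| ≤ 2 := by
  simpa using abs_invZetaTwoAway_sub_sum_le d 0

/-- `d / ψ(d)`, where `ψ` is Dedekind's psi function. -/
noncomputable def invPsiRatio (d : ℕ) : ℝ := ∏ p ∈ d.primeFactors, (1 + (p : ℝ)⁻¹)⁻¹

theorem invPsiRatio_nonneg (d : ℕ) : 0 ≤ invPsiRatio d :=
  prod_nonneg fun _ _ => by positivity

theorem invPsiRatio_le_one (d : ℕ) : invPsiRatio d ≤ 1 :=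
  prod_le_one (fun _ _ => by positivity) fun _ _ => inv_le_one_of_one_le₀ (by simp)

theorem invPsiRatio_mul_of_coprime {a b : ℕ} (ha : a ≠ 0) (hb : b ≠ 0) (h : a.Coprime b) :
    invPsiRatio (a * b) = invPsiRatio a * invPsiRatio b := by
  rw [invPsiRatio, Nat.primeFactors_mul ha hb, prod_union h.disjoint_primeFactors]; rfl

theorem invZetaTwoAway_one_eq {d : ℕ} (hd : d ≠ 0) :
    invZetaTwoAway 1 = invZetaTwoAway d * ∏ p ∈ d.primeFactors, (1 - ((p : ℝ) ^ 2)⁻¹) := by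
  let Q : Nat.Primes → ℝ := fun p =>
    if (p : ℕ) ∣ d then 1 - (((p : ℕ) : ℝ) ^ 2)⁻¹ else 1
  have hQ : HasProd Q (∏ p ∈ d.primeFactors, (1 - ((p : ℝ) ^ 2)⁻¹)) := by
    let s : Finset Nat.Primes := d.primeFactors.preimage (↑) Subtype.val_injective.injOn
    have h : HasProd Q (∏ p ∈ s, Q p) := hasProd_prod_of_ne_finset_one fun p hp =>
      if_neg fun hpd => hp (mem_preimage.mpr (Nat.mem_primeFactors.mpr ⟨p.prop, hpd, hd⟩))
    convert h using 1
    refine (prod_preimage _ _ _ _ fun p hp hrange =>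
      (hrange ⟨⟨p, ?_⟩, rfl⟩).elim).symm.trans
      (prod_congr rfl fun p hp =>
        (if_pos (Nat.dvd_of_mem_primeFactors (mem_preimage.mp hp))).symm)
    exact Nat.prime_of_mem_primeFactors hp
  refine (hasProd_invZetaTwoAway 1).unique ?_
  convert (hasProd_invZetaTwoAway d).mul hQ using 1
  funext p
  by_cases h : (p : ℕ) ∣ d <;>
    simp [Q, coprimeInv_apply_prime _ p.prop, p.prop.ne_one, h, inv_pow]

theorem totientRatio_mul_invZetaTwoAway {d : ℕ} (hd : d ≠ 0) :
    totientRatio d * invZetaTwoAway d = invZetaTwoAway 1 * invPsiRatio d := by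
  have hfactor : ∀ p ∈ d.primeFactors,
      1 - (p : ℝ)⁻¹ = (1 - ((p : ℝ) ^ 2)⁻¹) * (1 + (p : ℝ)⁻¹)⁻¹ :=
    fun p hp => by
      have : (p : ℝ) ≠ 0 := by exact_mod_cast (Nat.prime_of_mem_primeFactors hp).ne_zero
      field_simp; ring
  rw [invZetaTwoAway_one_eq hd, totientRatio, prod_congr rfl hfactor, prod_mul_distrib,
    invPsiRatio]
  ring

noncomputable def pairWeight : ArithmeticFunction ℝ :=
  ⟨fun d => (invPsiRatio d / d) ^ 2, by simp⟩

theorem pairWeight_apply (d : ℕ) : pairWeight d = (invPsiRatio d / d) ^ 2 := rfl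

theorem isMultiplicative_pairWeight : pairWeight.IsMultiplicative := by
  refine ⟨by simp [pairWeight_apply, invPsiRatio], fun {m n} hmn => ?_⟩
  rcases eq_or_ne m 0 with rfl | hm
  · simp [pairWeight_apply]
  rcases eq_or_ne n 0 with rfl | hn
  · simp [pairWeight_apply]
  rw [pairWeight_apply, pairWeight_apply, pairWeight_apply, invPsiRatio_mul_of_coprime hm hn hmn]
  push_cast
  ring

theorem abs_moebius_mul_pairWeight_le (d : ℕ) :
    |(μ d : ℝ) * pairWeight d| ≤ ((d : ℝ) ^ 2)⁻¹ := by
  refine (abs_moebius_mul_le d _).trans ?_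
  rw [pairWeight_apply, abs_pow, ← inv_pow, abs_div, Nat.abs_cast,
    abs_of_nonneg (invPsiRatio_nonneg d), div_eq_mul_inv]
  exact pow_le_pow_left₀ (mul_nonneg (invPsiRatio_nonneg d) (by positivity))
    (mul_le_of_le_one_left (by positivity) (invPsiRatio_le_one d)) 2

noncomputable def pairConst : ℝ := ∑' d, (μ d : ℝ) * pairWeight d

theorem abs_pairConst_sub_sum_le (H : ℕ) :
    |pairConst - ∑ d ∈ Icc 1 H, (μ d : ℝ) * pairWeight d| ≤ 2 / (H + 1) :=
  abs_tsum_sub_sum_Icc_le abs_moebius_mul_pairWeight_le (by simp) H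

theorem primeProd_eq : primeProd = invZetaTwoAway 1 ^ 2 * pairConst := by
  have h := ((hasProd_invZetaTwoAway 1).mul (hasProd_invZetaTwoAway 1)).mul
    (isMultiplicative_pairWeight.hasProd_one_sub
      (summable_of_abs_le_inv_sq abs_moebius_mul_pairWeight_le))
  rw [primeProd, sq, pairConst]
  refine HasProd.tprod_eq ?_
  convert h using 1
  funext p
  have hp : ((p : ℕ) : ℝ) ≠ 0 := by exact_mod_cast p.prop.ne_zero
  have hp' : 1 + ((p : ℕ) : ℝ)⁻¹ ≠ 0 := by positivity
  rw [coprimeInv_one, pairWeight_apply, invPsiRatio, p.prop.primeFactors, prod_singleton]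
  field_simp
  ring

theorem ite_coprime_eq_sum {R : Type*} [Ring R] {m : ℕ} (hm : m ≠ 0) (c : ℕ) :
    (if m.Coprime c then (1 : R) else 0) = ∑ e ∈ m.divisors with e ∣ c, (μ e : R) := by
  have hdiv : {e ∈ m.divisors | e ∣ c} = (m.gcd c).divisors := by
    rw [← Nat.divisors_filter_dvd_of_dvd hm (Nat.gcd_dvd_left m c)]
    exact filter_congr fun e he => by
      rw [Nat.dvd_gcd_iff, and_iff_right (Nat.dvd_of_mem_divisors he)]
  rw [hdiv, sum_divisors_moebius_eq_ite]

theorem ite_coprime_eq_sum_Icc {R : Type*} [Ring R] {a b H : ℕ} (ha : a ∈ Icc 1 H) :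
    (if a.Coprime b then (1 : R) else 0) =
      ∑ e ∈ Icc 1 H with e ∣ a ∧ e ∣ b, (μ e : R) := by
  rw [ite_coprime_eq_sum (by simp at ha; omega), divisors_eq_filter_dvd_Icc ha, filter_filter]

def coprimeCount (H m : ℕ) : ℕ := #{c ∈ Icc 1 H | m.Coprime c}

theorem coprimeCount_eq {m : ℕ} (hm : m ≠ 0) (H : ℕ) :
    (coprimeCount H m : ℝ) = ∑ e ∈ m.divisors, (μ e : ℝ) * ((H / e : ℕ) : ℝ) := by
  rw [coprimeCount, card_filter, Nat.cast_sum]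
  simp only [Nat.cast_ite, Nat.cast_one, Nat.cast_zero, ite_coprime_eq_sum hm, sum_filter]
  rw [sum_comm]
  refine sum_congr rfl fun e _ => ?_
  rw [← sum_filter, sum_const, card_filter_dvd_Icc, nsmul_eq_mul, mul_comm]

theorem abs_coprimeCount_sub_le {m : ℕ} (hm : m ≠ 0) (H : ℕ) :
    |(coprimeCount H m : ℝ) - H * totientRatio m| ≤ #m.divisors := by
  rw [coprimeCount_eq hm, totientRatio_eq_sum_divisors hm]
  simpa using abs_sum_mul_natDiv_sub_le m.divisors (b := fun _ => 1)
    (fun e _ => by exact_mod_cast abs_moebius_le_one) H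

def tripleCount (H : ℕ) : ℕ :=
  #{t ∈ Icc 1 H ×ˢ Icc 1 H ×ˢ Icc 1 H |
    t.1.Coprime t.2.1 ∧ t.1.Coprime t.2.2 ∧ t.2.1.Coprime t.2.2}

theorem tripleCount_eq (H : ℕ) : tripleCount H =
    ∑ a ∈ Icc 1 H, ∑ b ∈ Icc 1 H, if a.Coprime b then coprimeCount H (a * b) else 0 := by
  rw [tripleCount, card_filter, sum_product]
  refine sum_congr rfl fun a _ => ?_
  rw [sum_product]
  refine sum_congr rfl fun b _ => ?_
  by_cases hab : a.Coprime b
  · rw [if_pos hab, coprimeCount, card_filter]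
    refine sum_congr rfl fun c _ => if_congr ?_ rfl rfl
    exact ⟨fun h => Nat.Coprime.mul_left h.2.1 h.2.2,
      fun h => ⟨hab, Nat.coprime_mul_iff_left.mp h⟩⟩
  · rw [if_neg hab]
    exact sum_eq_zero fun c _ => if_neg fun h => hab h.1

noncomputable def pairSum (H : ℕ) : ℝ :=
  ∑ a ∈ Icc 1 H, ∑ b ∈ Icc 1 H, if a.Coprime b then totientRatio a * totientRatio b else 0

theorem abs_tripleCount_sub_mul_pairSum_le (H : ℕ) :
    |(tripleCount H : ℝ) - H * pairSum H| ≤ (H * (1 + Real.log H)) ^ 2 := by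
  have hterm : ∀ a ∈ Icc 1 H, ∀ b ∈ Icc 1 H,
      |(if a.Coprime b then (coprimeCount H (a * b) : ℝ) else 0) -
        H * (if a.Coprime b then totientRatio a * totientRatio b else 0)|
        ≤ #a.divisors * #b.divisors := fun a ha b hb => by
    have ha0 : a ≠ 0 := by simp at ha; omega
    have hb0 : b ≠ 0 := by simp at hb; omega
    split_ifs with hab
    · rw [← totientRatio_mul_of_coprime ha0 hb0 hab, ← Nat.cast_mul, ← hab.card_divisors_mul]
      exact abs_coprimeCount_sub_le (mul_ne_zero ha0 hb0) H
    · simp only [sub_zero, mul_zero, abs_zero]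
      positivity
  calc |(tripleCount H : ℝ) - H * pairSum H|
      ≤ ∑ a ∈ Icc 1 H, ∑ b ∈ Icc 1 H, (#a.divisors * #b.divisors : ℝ) := by
        rw [tripleCount_eq, pairSum, mul_sum]
        push_cast
        rw [← sum_sub_distrib]
        refine (abs_sum_le_sum_abs _ _).trans (sum_le_sum fun a ha => ?_)
        rw [mul_sum, ← sum_sub_distrib]
        exact (abs_sum_le_sum_abs _ _).trans (sum_le_sum fun b hb => hterm a ha b hb)
    _ = (∑ a ∈ Icc 1 H, (#a.divisors : ℝ)) ^ 2 := by rw [sq, sum_mul_sum]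
    _ ≤ (H * (1 + Real.log H)) ^ 2 :=
        pow_le_pow_left₀ (sum_nonneg fun _ _ => by positivity) (sum_Icc_card_divisors_le H) 2

theorem sum_sum_ite_coprime_mul {R : Type*} [CommRing R] (φ : ℕ → R) (H : ℕ) :
    ∑ a ∈ Icc 1 H, ∑ b ∈ Icc 1 H, (if a.Coprime b then φ a * φ b else 0) =
      ∑ e ∈ Icc 1 H, (μ e : R) * (∑ a ∈ Icc 1 H with e ∣ a, φ a) ^ 2 := by
  calc _ = ∑ a ∈ Icc 1 H, ∑ b ∈ Icc 1 H, ∑ e ∈ Icc 1 H,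
        (μ e : R) * ((if e ∣ a then φ a else 0) * (if e ∣ b then φ b else 0)) := by
        refine sum_congr rfl fun a ha => sum_congr rfl fun b _ => ?_
        rw [← mul_boole, ite_coprime_eq_sum_Icc ha, sum_filter, mul_sum]
        refine sum_congr rfl fun e _ => ?_
        by_cases hea : e ∣ a <;> by_cases heb : e ∣ b <;> simp [hea, heb, mul_comm]
    _ = ∑ e ∈ Icc 1 H, ∑ a ∈ Icc 1 H, ∑ b ∈ Icc 1 H,
        (μ e : R) * ((if e ∣ a then φ a else 0) * (if e ∣ b then φ b else 0)) :=
        (sum_congr rfl fun _ _ => sum_comm).trans sum_comm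
    _ = _ := by
        refine sum_congr rfl fun e _ => ?_
        rw [sq, sum_filter, sum_mul_sum, mul_sum]
        exact sum_congr rfl fun _ _ => (mul_sum _ _ _).symm

theorem abs_sum_moebius_coprimeInv_mul_natDiv_sub_le (d M : ℕ) :
    |∑ e ∈ Icc 1 M, (μ e : ℝ) * coprimeInv d e * ((M / e : ℕ) : ℝ) -
      M * invZetaTwoAway d|
      ≤ 3 + Real.log M := by
  have hfloor := abs_sum_mul_natDiv_sub_le (Icc 1 M) (a := fun e => (μ e : ℝ) * coprimeInv d e)
    (fun e _ => abs_moebius_mul_coprimeInv_le d e) M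
  simp only [mul_div_assoc, coprimeInv_div_self] at hfloor
  have htail :
      |M * ∑ e ∈ Icc 1 M, (μ e : ℝ) * coprimeInv d e ^ 2 - M * invZetaTwoAway d| ≤ 2 := by
    rw [← mul_sub, abs_mul, Nat.abs_cast, abs_sub_comm]
    calc (M : ℝ) * |invZetaTwoAway d - ∑ e ∈ Icc 1 M, (μ e : ℝ) * coprimeInv d e ^ 2|
        ≤ M * (2 / (M + 1)) := by gcongr; exact abs_invZetaTwoAway_sub_sum_le d M
      _ ≤ 2 := by
        rw [mul_div_assoc', div_le_iff₀ (by positivity)]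
        linarith
  calc _ ≤ (1 + Real.log M) + 2 :=
        (abs_sub_le _ _ _).trans
          (add_le_add (hfloor.trans (sum_Icc_inv_le_one_add_log M)) htail)
    _ = 3 + Real.log M := by ring

theorem sum_filter_dvd_totientRatio_eq {d : ℕ} (hd : 0 < d) (H : ℕ) :
    ∑ a ∈ Icc 1 H with d ∣ a, totientRatio a = totientRatio d *
      ∑ e ∈ Icc 1 (H / d), (μ e : ℝ) * coprimeInv d e * ((H / d / e : ℕ) : ℝ) := by
  rw [sum_filter_dvd_Icc _ hd, sum_congr rfl fun m hm =>
    totientRatio_mul hd.ne' (by simp at hm; omega), ← mul_sum, sum_Icc_sum_divisors]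

theorem abs_sum_filter_dvd_totientRatio_sub_le {d H : ℕ} (hd : d ∈ Icc 1 H) :
    |∑ a ∈ Icc 1 H with d ∣ a, totientRatio a - invZetaTwoAway 1 * invPsiRatio d * (H / d)|
      ≤ 5 + Real.log H := by
  rw [mem_Icc] at hd
  have hM : 0 < H / d := Nat.div_pos hd.2 hd.1
  rw [sum_filter_dvd_totientRatio_eq hd.1, ← totientRatio_mul_invZetaTwoAway (by omega),
    mul_assoc, ← mul_sub, abs_mul, abs_of_nonneg (totientRatio_nonneg d)]
  have hlog : Real.log (H / d : ℕ) ≤ Real.log H :=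
    Real.log_le_log (by exact_mod_cast hM) (by exact_mod_cast Nat.div_le_self H d)
  have hround : |(H / d : ℕ) * invZetaTwoAway d - invZetaTwoAway d * (H / d)| ≤ 2 := by
    rw [mul_comm, ← mul_sub, abs_mul]
    nlinarith [abs_invZetaTwoAway_le d, abs_natDiv_sub_div_le_one H d,
      abs_nonneg (invZetaTwoAway d),
      abs_nonneg (((H / d : ℕ) : ℝ) - H / d)]
  refine (mul_le_of_le_one_left (abs_nonneg _) (totientRatio_le_one d)).trans ?_
  calc _ ≤ (3 + Real.log (H / d : ℕ)) + 2 := (abs_sub_le _ _ _).trans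
        (add_le_add (abs_sum_moebius_coprimeInv_mul_natDiv_sub_le d (H / d)) hround)
    _ ≤ 5 + Real.log H := by linarith

theorem abs_sq_sub_sq_le {u a L B : ℝ} (hu : |u - a| ≤ L) (ha : |a| ≤ B) :
    |u ^ 2 - a ^ 2| ≤ L * (L + 2 * B) := by
  rw [show u ^ 2 - a ^ 2 = (u - a) * ((u - a) + 2 * a) by ring, abs_mul]
  refine mul_le_mul hu ((abs_add_le _ _).trans ?_) (abs_nonneg _) ((abs_nonneg _).trans hu)
  rw [abs_mul, abs_two]
  linarith

theorem abs_pairSum_sub_le (H : ℕ) :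
    |pairSum H - H ^ 2 * invZetaTwoAway 1 ^ 2 * ∑ d ∈ Icc 1 H, (μ d : ℝ) * pairWeight d|
      ≤ 45 * H * (1 + Real.log H) ^ 2 := by
  set L := 5 + Real.log H
  have hlog : 0 ≤ Real.log H := Real.log_natCast_nonneg H
  have hterm : ∀ d ∈ Icc 1 H,
      |(μ d : ℝ) * (∑ a ∈ Icc 1 H with d ∣ a, totientRatio a) ^ 2 -
        H ^ 2 * invZetaTwoAway 1 ^ 2 * ((μ d : ℝ) * pairWeight d)|
        ≤ L ^ 2 + 4 * L * (H * (d : ℝ)⁻¹) := fun d hd => by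
    have hA : |invZetaTwoAway 1 * invPsiRatio d * (H / d)| ≤ 2 * (H / d) := by
      rw [abs_mul, abs_mul, abs_of_nonneg (invPsiRatio_nonneg d),
        abs_of_nonneg (by positivity : (0 : ℝ) ≤ H / d)]
      gcongr
      nlinarith [abs_invZetaTwoAway_le 1, invPsiRatio_le_one d, invPsiRatio_nonneg d,
        abs_nonneg (invZetaTwoAway 1)]
    rw [show (H : ℝ) ^ 2 * invZetaTwoAway 1 ^ 2 * ((μ d : ℝ) * pairWeight d) =
        (μ d : ℝ) * (invZetaTwoAway 1 * invPsiRatio d * (H / d)) ^ 2 by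
      rw [pairWeight_apply]; ring, ← mul_sub]
    refine (abs_moebius_mul_le d _).trans
      ((abs_sq_sub_sq_le (abs_sum_filter_dvd_totientRatio_sub_le hd) hA).trans (le_of_eq ?_))
    ring
  rw [pairSum, sum_sum_ite_coprime_mul, mul_sum, ← sum_sub_distrib]
  calc _ ≤ ∑ d ∈ Icc 1 H, (L ^ 2 + 4 * L * (H * (d : ℝ)⁻¹)) :=
        (abs_sum_le_sum_abs _ _).trans (sum_le_sum hterm)
    _ = H * L ^ 2 + 4 * L * (H * ∑ d ∈ Icc 1 H, (d : ℝ)⁻¹) := by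
        rw [sum_add_distrib, sum_const, Nat.card_Icc, ← mul_sum, ← mul_sum, nsmul_eq_mul,
          add_tsub_cancel_right]
    _ ≤ H * L ^ 2 + 4 * L * (H * (1 + Real.log H)) := by
        gcongr
        exact sum_Icc_inv_le_one_add_log H
    _ ≤ 45 * H * (1 + Real.log H) ^ 2 := by
        have hH : (0 : ℝ) ≤ H := Nat.cast_nonneg H
        nlinarith [mul_nonneg hH hlog, mul_nonneg (mul_nonneg hH hlog) hlog]

theorem abs_tripleCount_sub_primeProd_le (H : ℕ) :
    |(tripleCount H : ℝ) - H ^ 3 * primeProd| ≤ 54 * (H * (1 + Real.log H)) ^ 2 := by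
  set T := ∑ d ∈ Icc 1 H, (μ d : ℝ) * pairWeight d
  have hconst : |(H : ℝ) ^ 3 * invZetaTwoAway 1 ^ 2 * (T - pairConst)| ≤ 8 * H ^ 2 := by
    have hZ := abs_le.mp (abs_invZetaTwoAway_le 1)
    have htail : H * |T - pairConst| ≤ 2 := by
      have h := abs_pairConst_sub_sum_le H
      rw [abs_sub_comm, le_div_iff₀ (by positivity)] at h
      nlinarith [abs_nonneg (T - pairConst)]
    rw [abs_mul, abs_mul, abs_of_nonneg (by positivity : (0 : ℝ) ≤ H ^ 3),
      abs_of_nonneg (sq_nonneg _)]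
    calc (H : ℝ) ^ 3 * invZetaTwoAway 1 ^ 2 * |T - pairConst|
        = (H : ℝ) ^ 2 * invZetaTwoAway 1 ^ 2 * (H * |T - pairConst|) := by ring
      _ ≤ (H : ℝ) ^ 2 * 2 ^ 2 * 2 :=
        mul_le_mul (mul_le_mul_of_nonneg_left (sq_le_sq' hZ.1 hZ.2) (by positivity)) htail
          (by positivity) (by positivity)
      _ = 8 * (H : ℝ) ^ 2 := by ring
  have hH : (H : ℝ) ^ 2 ≤ (H * (1 + Real.log H)) ^ 2 := by
    rw [mul_pow]
    exact le_mul_of_one_le_right (sq_nonneg _)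
      (one_le_pow₀ (le_add_of_nonneg_right (Real.log_natCast_nonneg H)))
  have hpair := abs_pairSum_sub_le H
  rw [primeProd_eq, show (tripleCount H : ℝ) - H ^ 3 * (invZetaTwoAway 1 ^ 2 * pairConst) =
      ((tripleCount H : ℝ) - H * pairSum H) +
        H * (pairSum H - H ^ 2 * invZetaTwoAway 1 ^ 2 * T) +
        H ^ 3 * invZetaTwoAway 1 ^ 2 * (T - pairConst) by ring]
  refine (abs_add_three _ _ _).trans ?_
  rw [abs_mul, Nat.abs_cast]
  nlinarith [abs_tripleCount_sub_mul_pairSum_le H, Nat.cast_nonneg (α := ℝ) H]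

theorem isBigO_mul_one_add_log_sq :
    (fun H : ℕ => ((H : ℝ) * (1 + Real.log H)) ^ 2) =O[atTop]
      (fun H : ℕ => (H : ℝ) ^ 2 * Real.log H ^ 2) := by
  refine Asymptotics.IsBigO.of_bound 4 ((eventually_ge_atTop 3).mono fun H hH => ?_)
  have hlog : 1 ≤ Real.log H := by
    have h3 : (3 : ℝ) ≤ H := by exact_mod_cast hH
    rw [Real.le_log_iff_exp_le (by positivity)]
    linarith [Real.exp_one_lt_d9]
  rw [Real.norm_eq_abs, Real.norm_eq_abs, abs_of_nonneg (sq_nonneg _),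
    abs_of_nonneg (by positivity)]
  nlinarith [sq_nonneg (H : ℝ), mul_nonneg (sq_nonneg (H : ℝ)) (sq_nonneg (Real.log H - 1))]

end PairwiseCoprimeTriples

open PairwiseCoprimeTriples in
theorem stmt_4 :
    (fun H : ℕ =>
      (((((Finset.Icc 1 H) ×ˢ (Finset.Icc 1 H) ×ˢ (Finset.Icc 1 H)).filter
        (fun t : ℕ × ℕ × ℕ =>
          Nat.gcd t.1 t.2.1 = 1 ∧ Nat.gcd t.1 t.2.2 = 1 ∧ Nat.gcd t.2.1 t.2.2 = 1)).card : ℝ)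
        - (H : ℝ) ^ 3 * primeProd))
      =O[atTop] (fun H : ℕ => (H : ℝ) ^ 2 * (Real.log H) ^ 2) := by
  refine (Asymptotics.IsBigO.of_bound 54 (Eventually.of_forall fun H => ?_)).trans
    isBigO_mul_one_add_log_sq
  rw [Real.norm_eq_abs, Real.norm_eq_abs, abs_of_nonneg (sq_nonneg ((H : ℝ) * (1 + Real.log H)))]
  exact abs_tripleCount_sub_primeProd_le H
end

section
/- Let D_2(H) be the number of integer polynomials A_2 x^2 + A_1 x + A_0 with A_2 ≠ 0, max(|A_0|,|A_1|,|A_2|) ≤ H, satisfying Dumas's criterion with respect to some prime. Then D_2(H) ≤ (2H)^3 (1 − ∏_p (1 − 1/p)^2(1 + 2/p)) + O(H^2 (log H)^2) as H → ∞. -/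
open Filter Polynomial Topology

/-!
A union bound over primes suffices. For a quadratic, Dumas's criterion at `p` says that the
segment from `(0, v₀)` to `(2, v₂)` has no lattice point at `x = 1`, i.e. `v₀ + v₂` is odd, and
that `(1, v₁)` lies on or above it, i.e. `p ^ ⌈(v₀ + v₂) / 2⌉ ∣ A₁`; in particular `p ≤ H`. Writing
the even one of `v₀, v₂` as `2a` and the odd one as `2b + 1`, the density of such triples is
`2 (1 - 1/p)² p⁻² ∑_{a,b} p^(-3a-3b) = 2p² / (p² + p + 1)²`, and counting them in the box
`[-H, H]³` costs an error `O(H² / p + H log² H)`. Summing over `p ≤ H`, the densities add up to at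
most `17/27`, while the factors at `p = 2, 3` alone already give `∏_p (1 - 1/p)² (1 + 2/p) ≤ 10/27`;
the errors add up to `O(H² log² H)` because `∑_{p ≤ H} 1/p ≤ 1 + log H`.
-/

open Finset

noncomputable section

def heightBox (H : ℕ) : Finset ℤ := Icc (-(H : ℤ)) H

lemma mem_heightBox {H : ℕ} {x : ℤ} : x ∈ heightBox H ↔ x.natAbs ≤ H := by
  rw [heightBox, mem_Icc]; omega

lemma card_heightBox (H : ℕ) : #(heightBox H) = 2 * H + 1 := by
  rw [heightBox, Int.card_Icc]; omega

def multiples (H d : ℕ) : Finset ℤ := (heightBox H).filter ((d : ℤ) ∣ ·)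

lemma multiples_eq_image {H d : ℕ} (hd : 0 < d) :
    multiples H d = (heightBox (H / d)).image ((d : ℤ) * ·) := by
  have hd' : (0 : ℤ) < d := by exact_mod_cast hd
  ext x
  simp only [multiples, heightBox, mem_filter, mem_image, mem_Icc, Int.natCast_div]
  constructor
  · rintro ⟨⟨hlo, hhi⟩, e, rfl⟩
    refine ⟨e, ⟨?_, ?_⟩, rfl⟩
    · rw [neg_le, Int.le_ediv_iff_mul_le hd']; linarith
    · rw [Int.le_ediv_iff_mul_le hd']; linarith
  · rintro ⟨e, ⟨hlo, hhi⟩, rfl⟩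
    rw [neg_le, Int.le_ediv_iff_mul_le hd'] at hlo
    rw [Int.le_ediv_iff_mul_le hd'] at hhi
    exact ⟨⟨by linarith, by linarith⟩, dvd_mul_right _ _⟩

lemma card_multiples {H d : ℕ} (hd : 0 < d) : #(multiples H d) = 2 * (H / d) + 1 := by
  rw [multiples_eq_image hd, card_image_of_injective _ (mul_right_injective₀ (by omega)),
    card_heightBox]

lemma card_multiples_le {H d : ℕ} (hd : 0 < d) : (#(multiples H d) : ℝ) ≤ 2 * H / d + 1 := by
  rw [card_multiples hd]
  push_cast
  have := Nat.cast_div_le (α := ℝ) (m := H) (n := d)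
  rw [mul_div_assoc]
  linarith

lemma sub_one_le_cast_div (H d : ℕ) : (H : ℝ) / d - 1 ≤ (H / d : ℕ) := by
  rw [← Nat.floor_div_eq_div (K := ℝ)]
  exact (Nat.sub_one_lt_floor _).le

/-- The nonzero integers of `heightBox H` with `p`-adic valuation exactly `i`. -/
def valLevel (p H i : ℕ) : Finset ℤ := multiples H (p ^ i) \ multiples H (p ^ (i + 1))

lemma card_valLevel_le {p : ℕ} (hp : 0 < p) (H i : ℕ) :
    (#(valLevel p H i) : ℝ) ≤ 2 * H * (1 - (p : ℝ)⁻¹) * (p : ℝ)⁻¹ ^ i + 2 := by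
  have hsub : multiples H (p ^ (i + 1)) ⊆ multiples H (p ^ i) := fun x hx => by
    simp only [multiples, mem_filter] at hx ⊢
    exact ⟨hx.1, (pow_dvd_pow _ i.le_succ).natCast.trans hx.2⟩
  have hpi : 0 < p ^ i := pow_pos hp i
  have hpi1 : 0 < p ^ (i + 1) := pow_pos hp (i + 1)
  have hlow := sub_one_le_cast_div H (p ^ (i + 1))
  have hhigh := Nat.cast_div_le (α := ℝ) (m := H) (n := p ^ i)
  rw [valLevel, card_sdiff_of_subset hsub, Nat.cast_sub (card_le_card hsub),
    card_multiples hpi, card_multiples hpi1]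
  push_cast at hlow hhigh ⊢
  have hp' : (0 : ℝ) < p := by exact_mod_cast hp
  calc _ ≤ 2 * ((H : ℝ) / p ^ i) - 2 * ((H : ℝ) / p ^ (i + 1) - 1) := by linarith
    _ = _ := by rw [inv_pow, pow_succ]; field_simp; ring

lemma mem_valLevel_padicValInt {p H : ℕ} [Fact p.Prime] {x : ℤ} (hx0 : x ≠ 0)
    (hx : x.natAbs ≤ H) : x ∈ valLevel p H (padicValInt p x) := by
  simp [valLevel, multiples, mem_heightBox, padicValInt_dvd_iff, hx0, hx]

lemma padicValInt_le_log {p H : ℕ} (hp : 2 ≤ p) {x : ℤ} (hx0 : x ≠ 0) (hx : x.natAbs ≤ H) :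
    padicValInt p x ≤ Nat.log 2 H := by
  apply Nat.le_log_of_pow_le one_lt_two
  calc 2 ^ padicValInt p x ≤ p ^ padicValInt p x := Nat.pow_le_pow_left hp _
    _ ≤ x.natAbs := Nat.le_of_dvd (Int.natAbs_pos.mpr hx0) pow_padicValNat_dvd
    _ ≤ H := hx

lemma DumasAt.odd_padicValInt_add {p : ℕ} {A : ℕ → ℤ} (h : DumasAt p 2 A) :
    Odd (padicValInt p (A 0) + padicValInt p (A 2)) := by
  refine Nat.not_even_iff_odd.mp fun ⟨m, hm⟩ => h.2.2.2 ⟨1, m, by norm_num, by norm_num, ?_⟩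
  simp only [vp]
  omega

lemma DumasAt.pow_dvd {p : ℕ} [Fact p.Prime] {A : ℕ → ℤ} (h : DumasAt p 2 A) :
    (p : ℤ) ^ ((padicValInt p (A 0) + padicValInt p (A 2) + 1) / 2) ∣ A 1 := by
  rw [padicValInt_dvd_iff]
  by_cases h1 : A 1 = 0
  · exact Or.inl h1
  · have := h.2.2.1 1 one_pos one_lt_two h1
    simp only [vp] at this
    omega

/-- Up to exchanging `A₀` and `A₂`, the coefficients of a quadratic satisfying Dumas's criterion at
`p` form a triple of this shape: `v_p(A₀) = 2a`, `v_p(A₂) = 2b + 1` and `p ^ (a + b + 1) ∣ A₁`. -/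
def dumasTriples (p H L : ℕ) : Finset (ℤ × ℤ × ℤ) :=
  (range (L + 1) ×ˢ range (L + 1)).biUnion fun ab =>
    valLevel p H (2 * ab.1) ×ˢ multiples H (p ^ (ab.1 + ab.2 + 1)) ×ˢ valLevel p H (2 * ab.2 + 1)

lemma mem_dumasTriples_of_even_of_odd {p H : ℕ} [hp : Fact p.Prime] {x y z : ℤ} (hx0 : x ≠ 0)
    (hz0 : z ≠ 0) (hx : x.natAbs ≤ H) (hy : y.natAbs ≤ H) (hz : z.natAbs ≤ H)
    (hxv : Even (padicValInt p x)) (hzv : Odd (padicValInt p z))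
    (hdvd : (p : ℤ) ^ ((padicValInt p x + padicValInt p z + 1) / 2) ∣ y) :
    (x, y, z) ∈ dumasTriples p H (Nat.log 2 H) := by
  obtain ⟨a, ha⟩ := hxv
  obtain ⟨b, hb⟩ := hzv
  have hxL := padicValInt_le_log hp.out.two_le hx0 hx
  have hzL := padicValInt_le_log hp.out.two_le hz0 hz
  refine mem_biUnion.mpr ⟨(a, b), ?_, ?_⟩
  · simp only [mem_product, mem_range]
    omega
  · have hx' := mem_valLevel_padicValInt (p := p) hx0 hx
    have hz' := mem_valLevel_padicValInt (p := p) hz0 hz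
    have hk : (padicValInt p x + padicValInt p z + 1) / 2 = a + b + 1 := by omega
    rw [ha, ← two_mul] at hx'
    rw [hb] at hz'
    rw [hk] at hdvd
    simp only [mem_product, multiples, mem_filter, mem_heightBox, Nat.cast_pow]
    exact ⟨hx', ⟨hy, hdvd⟩, hz'⟩

lemma DumasAt.mem_dumasTriples {p H : ℕ} [Fact p.Prime] {A : ℕ → ℤ}
    (hA : ∀ i, (A i).natAbs ≤ H) (h : DumasAt p 2 A) :
    (A 0, A 1, A 2) ∈ dumasTriples p H (Nat.log 2 H) ∨
      (A 2, A 1, A 0) ∈ dumasTriples p H (Nat.log 2 H) := by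
  have hodd := h.odd_padicValInt_add
  have hdvd := h.pow_dvd
  rcases Nat.even_or_odd (padicValInt p (A 0)) with h0 | h0
  · exact Or.inl <| mem_dumasTriples_of_even_of_odd h.1 h.2.1 (hA 0) (hA 1) (hA 2) h0
      (by simpa [Nat.odd_add', h0] using hodd) hdvd
  · refine Or.inr <| mem_dumasTriples_of_even_of_odd h.2.1 h.1 (hA 2) (hA 1) (hA 0)
      (by simpa [Nat.odd_add, h0] using hodd) h0 (by rwa [add_comm (padicValInt p (A 2))])

lemma le_of_mem_dumasTriples {p H L : ℕ} {t : ℤ × ℤ × ℤ} (ht : t ∈ dumasTriples p H L) :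
    p ≤ H := by
  simp only [dumasTriples, mem_biUnion, mem_product, valLevel, Finset.mem_sdiff, multiples,
    mem_filter, mem_heightBox] at ht
  obtain ⟨⟨a, b⟩, -, -, -, ⟨hz, hdvd⟩, hndvd⟩ := ht
  have hz0 : t.2.2 ≠ 0 := by
    rintro h0
    exact hndvd ⟨by simp [h0], by simp [h0]⟩
  have hp : (p : ℤ) ∣ t.2.2 := (dvd_pow_self _ (by omega)).natCast.trans hdvd
  exact (Nat.le_of_dvd (Int.natAbs_pos.mpr hz0) (Int.natCast_dvd.mp hp)).trans hz

lemma Dcount_two_le_sum_card_dumasTriples (H : ℕ) :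
    Dcount 2 H ≤ ∑ p ∈ Nat.primesBelow (H + 1), 2 * #(dumasTriples p H (Nat.log 2 H)) := by
  set T := fun p => dumasTriples p H (Nat.log 2 H)
  set S := {A : ℕ → ℤ | A 2 ≠ 0 ∧ (∀ i, (A i).natAbs ≤ H) ∧ (∀ i, 2 < i → A i = 0) ∧
    ∃ p : ℕ, p.Prime ∧ DumasAt p 2 A}
  let coeffs : (ℕ → ℤ) → ℤ × ℤ × ℤ := fun A => (A 0, A 1, A 2)
  let swap : ℤ × ℤ × ℤ → ℤ × ℤ × ℤ := fun t => (t.2.2, t.2.1, t.1)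
  let U := (Nat.primesBelow (H + 1)).biUnion fun p => T p ∪ (T p).image swap
  have hinj : Set.InjOn coeffs S := by
    rintro A ⟨-, -, hA, -⟩ B ⟨-, -, hB, -⟩ hAB
    simp only [coeffs, Prod.mk.injEq] at hAB
    funext i
    match i with
    | 0 => exact hAB.1
    | 1 => exact hAB.2.1
    | 2 => exact hAB.2.2
    | n + 3 => rw [hA (n + 3) (by omega), hB (n + 3) (by omega)]
  have hmaps : coeffs '' S ⊆ U := by
    rintro _ ⟨A, ⟨-, hA, -, p, hp, hD⟩, rfl⟩
    have := Fact.mk hp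
    simp only [U, coe_biUnion, Set.mem_iUnion, mem_coe, Nat.mem_primesBelow, mem_union,
      mem_image]
    rcases hD.mem_dumasTriples hA with h | h
    · exact ⟨p, ⟨Nat.lt_succ_of_le (le_of_mem_dumasTriples h), hp⟩, Or.inl h⟩
    · exact ⟨p, ⟨Nat.lt_succ_of_le (le_of_mem_dumasTriples h), hp⟩, Or.inr ⟨_, h, rfl⟩⟩
  calc Dcount 2 H = (coeffs '' S).ncard := hinj.ncard_image.symm
    _ ≤ #U := by
      rw [← Set.ncard_coe_finset]
      exact Set.ncard_le_ncard hmaps (finite_toSet _)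
    _ ≤ ∑ p ∈ Nat.primesBelow (H + 1), #(T p ∪ (T p).image swap) := card_biUnion_le
    _ ≤ _ := sum_le_sum fun p _ => (card_union_le _ _).trans (by grind [card_image_le])

lemma add_two_mul_add_one_mul_add_two_le {H u v w : ℝ} (hH : 1 ≤ H) (hu : u ≤ 2 * H)
    (hv : v ≤ 2 * H) (hw : 0 ≤ w) (huv : u * v ≤ 2 * H * w) :
    (u + 2) * (w + 1) * (v + 2) ≤ u * v * w + 14 * H * w + 12 * H := by
  nlinarith [mul_le_mul_of_nonneg_left hu hw, mul_le_mul_of_nonneg_left hv hw]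

lemma geom_sum_range_le {r : ℝ} (h0 : 0 ≤ r) (h1 : r < 1) (n : ℕ) :
    ∑ a ∈ range n, r ^ a ≤ (1 - r)⁻¹ := by
  rw [range_eq_Ico]
  simpa using geom_sum_Ico_le_of_lt_one (m := 0) (n := n) h0 h1

lemma sum_range_product_pow_mul_pow_le {r : ℝ} (h0 : 0 ≤ r) (h1 : r < 1) (n : ℕ) :
    ∑ ab ∈ range n ×ˢ range n, r ^ ab.1 * r ^ ab.2 ≤ (1 - r)⁻¹ ^ 2 := by
  rw [sum_product, ← sum_mul_sum, sq]
  have := geom_sum_range_le h0 h1 n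
  exact mul_le_mul this this (sum_nonneg fun _ _ => by positivity) (inv_nonneg.mpr (by linarith))

lemma card_dumasTriples_summand_le {p : ℕ} (hp : 2 ≤ p) {H : ℕ} (hH : 1 ≤ H) (a b : ℕ) :
    (#(valLevel p H (2 * a) ×ˢ multiples H (p ^ (a + b + 1)) ×ˢ valLevel p H (2 * b + 1)) : ℝ)
      ≤ 8 * H ^ 3 * (1 - (p : ℝ)⁻¹) ^ 2 * (p : ℝ)⁻¹ ^ 2
          * (((p : ℝ)⁻¹ ^ 3) ^ a * ((p : ℝ)⁻¹ ^ 3) ^ b)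
        + 28 * H ^ 2 * (p : ℝ)⁻¹ * ((p : ℝ)⁻¹ ^ a * (p : ℝ)⁻¹ ^ b) + 12 * H := by
  have hp0 : (0 : ℝ) < p := by exact_mod_cast (by omega : 0 < p)
  set q := (p : ℝ)⁻¹ with hq
  have hq0 : 0 ≤ q := by positivity
  have hq1 : q ≤ 1 := inv_le_one_of_one_le₀ (by exact_mod_cast (by omega : 1 ≤ p))
  have hH' : (1 : ℝ) ≤ H := by exact_mod_cast hH
  set u := 2 * H * (1 - q) * q ^ (2 * a)
  set v := 2 * H * (1 - q) * q ^ (2 * b + 1)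
  set w := 2 * H * q ^ (a + b + 1)
  have hA := card_valLevel_le (by omega : 0 < p) H (2 * a)
  have hC := card_valLevel_le (by omega : 0 < p) H (2 * b + 1)
  have hB : (#(multiples H (p ^ (a + b + 1))) : ℝ) ≤ w + 1 := by
    have := card_multiples_le (H := H) (pow_pos (by omega : 0 < p) (a + b + 1))
    rwa [Nat.cast_pow, div_eq_mul_inv, ← inv_pow] at this
  have hw : 0 ≤ w := by positivity
  have hle : ∀ n, 2 * (H : ℝ) * (1 - q) * q ^ n ≤ 2 * H := fun n => by
    have : (1 - q) * q ^ n ≤ 1 := mul_le_one₀ (by linarith) (pow_nonneg hq0 n) (pow_le_one₀ hq0 hq1)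
    nlinarith
  have huv : u * v ≤ 2 * H * w := by
    have h1 : (1 - q) ^ 2 * q ^ (2 * a + (2 * b + 1)) ≤ q ^ (a + b + 1) :=
      mul_le_of_le_one_left (pow_nonneg hq0 _) (pow_le_one₀ (by linarith) (by linarith)) |>.trans
        (pow_le_pow_of_le_one hq0 hq1 (by omega))
    calc u * v = 4 * H ^ 2 * ((1 - q) ^ 2 * q ^ (2 * a + (2 * b + 1))) := by ring
      _ ≤ 4 * H ^ 2 * q ^ (a + b + 1) := by gcongr
      _ = 2 * H * w := by ring
  rw [card_product, card_product, Nat.cast_mul, Nat.cast_mul, ← mul_assoc]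
  calc _ ≤ (u + 2) * (w + 1) * (v + 2) := by gcongr
    _ ≤ u * v * w + 14 * H * w + 12 * H :=
      add_two_mul_add_one_mul_add_two_le hH' (hle _) (hle _) hw huv
    _ = _ := by ring

lemma card_dumasTriples_le {p : ℕ} (hp : 2 ≤ p) {H : ℕ} (hH : 1 ≤ H) (L : ℕ) :
    (#(dumasTriples p H L) : ℝ) ≤
      8 * H ^ 3 * ((p : ℝ) ^ 2 / ((p : ℝ) ^ 2 + p + 1) ^ 2) + 112 * H ^ 2 / p
        + 12 * H * (L + 1) ^ 2 := by
  have hp2 : (2 : ℝ) ≤ p := by exact_mod_cast hp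
  set q := (p : ℝ)⁻¹ with hq
  have hq0 : 0 ≤ q := by positivity
  have hq2 : q ≤ 1 / 2 := by rw [hq, one_div]; gcongr
  have hq3 : q ^ 3 < 1 := pow_lt_one₀ hq0 (by linarith) (by norm_num)
  have hgeom1 := sum_range_product_pow_mul_pow_le (pow_nonneg hq0 3) hq3 (L + 1)
  have hgeom2 := sum_range_product_pow_mul_pow_le hq0 (by linarith) (L + 1)
  have hdensity :
      (1 - q) ^ 2 * q ^ 2 * (1 - q ^ 3)⁻¹ ^ 2 = (p : ℝ) ^ 2 / ((p : ℝ) ^ 2 + p + 1) ^ 2 := by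
    have h1 : (p : ℝ) - 1 ≠ 0 := by linarith
    have h3 : 1 - q ^ 3 = (1 - q) * (p ^ 2 + p + 1) / p ^ 2 := by rw [hq]; field_simp; ring
    rw [h3, hq]
    field_simp
  have h4 : (1 - q)⁻¹ ^ 2 ≤ 4 := by
    rw [inv_pow, inv_le_comm₀ (by nlinarith) (by norm_num)]; nlinarith
  calc (#(dumasTriples p H L) : ℝ)
      ≤ ∑ ab ∈ range (L + 1) ×ˢ range (L + 1), (#(valLevel p H (2 * ab.1) ×ˢ
          multiples H (p ^ (ab.1 + ab.2 + 1)) ×ˢ valLevel p H (2 * ab.2 + 1)) : ℝ) := by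
        exact_mod_cast card_biUnion_le
    _ ≤ ∑ ab ∈ range (L + 1) ×ˢ range (L + 1),
          (8 * H ^ 3 * (1 - q) ^ 2 * q ^ 2 * ((q ^ 3) ^ ab.1 * (q ^ 3) ^ ab.2)
            + 28 * H ^ 2 * q * (q ^ ab.1 * q ^ ab.2) + 12 * H) :=
        sum_le_sum fun ab _ => card_dumasTriples_summand_le hp hH ab.1 ab.2
    _ = 8 * H ^ 3 * (1 - q) ^ 2 * q ^ 2 *
            ∑ ab ∈ range (L + 1) ×ˢ range (L + 1), (q ^ 3) ^ ab.1 * (q ^ 3) ^ ab.2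
          + 28 * H ^ 2 * q * ∑ ab ∈ range (L + 1) ×ˢ range (L + 1), q ^ ab.1 * q ^ ab.2
          + 12 * H * (L + 1) ^ 2 := by
        rw [sum_add_distrib, sum_add_distrib, ← mul_sum, ← mul_sum, sum_const, card_product,
          card_range, nsmul_eq_mul]
        push_cast
        ring
    _ ≤ 8 * H ^ 3 * (1 - q) ^ 2 * q ^ 2 * (1 - q ^ 3)⁻¹ ^ 2 + 28 * H ^ 2 * q * 4
          + 12 * H * (L + 1) ^ 2 := by
        gcongr
        exact hgeom2.trans h4
    _ = _ := by
        rw [mul_assoc (8 * (H : ℝ) ^ 3), mul_assoc (8 * (H : ℝ) ^ 3), hdensity, hq]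
        ring

lemma sum_Ico_inv_mul_succ {a b : ℕ} (ha : 0 < a) (hab : a ≤ b) :
    ∑ n ∈ Ico a b, ((n : ℝ) * (n + 1))⁻¹ = (a : ℝ)⁻¹ - (b : ℝ)⁻¹ := by
  induction b, hab using Nat.le_induction with
  | base => simp
  | succ b hab ih =>
    have hb : (0 : ℝ) < b := by exact_mod_cast ha.trans_le hab
    rw [sum_Ico_succ_top hab, ih]
    push_cast
    field_simp
    ring

lemma sum_primesBelow_sq_div_le (n : ℕ) :
    ∑ p ∈ Nat.primesBelow n, (p : ℝ) ^ 2 / ((p : ℝ) ^ 2 + p + 1) ^ 2 ≤ 17 / 54 := by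
  set f : ℕ → ℝ := fun p => (p : ℝ) ^ 2 / ((p : ℝ) ^ 2 + p + 1) ^ 2
  have hf0 : ∀ p, 0 ≤ f p := fun p => by positivity
  have hsmall : ∑ p ∈ (Nat.primesBelow n).filter (· < 8), f p ≤ ∑ p ∈ Nat.primesBelow 8, f p :=
    sum_le_sum_of_subset_of_nonneg
      (fun p hp => by simp only [mem_filter, Nat.mem_primesBelow] at hp ⊢; exact ⟨hp.2, hp.1.2⟩)
      (fun p _ _ => hf0 p)
  have hprimes : Nat.primesBelow 8 = {2, 3, 5, 7} := by decide
  have hlarge : ∑ p ∈ (Nat.primesBelow n).filter (¬ · < 8), f p ≤ 8⁻¹ := by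
    calc _ ≤ ∑ m ∈ Ico 8 (max n 8), ((m : ℝ) * (m + 1))⁻¹ := by
          refine sum_le_sum_of_subset_of_nonneg (fun p hp => ?_) (fun m _ _ => by positivity)
            |>.trans' (sum_le_sum fun p hp => ?_)
          · simp only [mem_filter, Nat.mem_primesBelow, mem_Ico] at hp ⊢
            omega
          · have hp : (0 : ℝ) < p := by
              have := (mem_filter.mp hp).2
              exact_mod_cast (by omega : 0 < p)
            rw [div_le_iff₀ (by positivity), inv_mul_eq_div, le_div_iff₀ (by positivity)]
            nlinarith [sq_nonneg (p : ℝ), (p.cast_nonneg : (0 : ℝ) ≤ p)]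
      _ ≤ 8⁻¹ := by
          rw [sum_Ico_inv_mul_succ (by norm_num) (le_max_right _ _)]
          exact sub_le_self _ (by positivity)
  rw [← sum_filter_add_sum_filter_not _ (· < 8)]
  have hexact : ∑ p ∈ Nat.primesBelow 8, f p ≤ 17 / 54 - 8⁻¹ := by
    rw [hprimes]
    norm_num [f]
  linarith

lemma sum_primesBelow_inv_le (H : ℕ) :
    ∑ p ∈ Nat.primesBelow (H + 1), (p : ℝ)⁻¹ ≤ 1 + Real.log H := by
  refine le_trans ?_ (harmonic_le_one_add_log H)
  rw [harmonic_eq_sum_Icc, Rat.cast_sum]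
  refine sum_le_sum_of_subset_of_nonneg (fun p hp => ?_) (fun _ _ _ => by positivity)
    |>.trans_eq (sum_congr rfl fun _ _ => by push_cast; rfl)
  simp only [Nat.mem_primesBelow, mem_Icc] at hp ⊢
  exact ⟨hp.2.one_le, by omega⟩

lemma card_primesBelow_le (n : ℕ) : #(Nat.primesBelow n) ≤ n :=
  (card_filter_le _ _).trans (card_range n).le

lemma tprod_le_prod_of_nonneg_of_le_one {ι : Type*} {f : ι → ℝ} (h0 : ∀ i, 0 ≤ f i)
    (h1 : ∀ i, f i ≤ 1) (s : Finset ι) : ∏' i, f i ≤ ∏ i ∈ s, f i := by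
  classical
  have hanti : Antitone fun s : Finset ι => ∏ i ∈ s, f i := fun s t hst => by
    dsimp only
    rw [← prod_sdiff hst]
    exact mul_le_of_le_one_left (prod_nonneg fun i _ => h0 i) (prod_le_one (fun i _ => h0 i)
      fun i _ => h1 i)
  have hbdd : BddBelow (Set.range fun s : Finset ι => ∏ i ∈ s, f i) :=
    ⟨0, by rintro _ ⟨s, rfl⟩; exact prod_nonneg fun i _ => h0 i⟩
  have hprod : HasProd f (⨅ s : Finset ι, ∏ i ∈ s, f i) := tendsto_atTop_ciInf hanti hbdd
  rw [hprod.tprod_eq]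
  exact ciInf_le hbdd s

lemma primeProd_le : primeProd ≤ 10 / 27 := by
  have hfactor : ∀ p : Nat.Primes, 0 ≤ (1 - 1 / ((p : ℕ) : ℝ)) ^ 2 * (1 + 2 / ((p : ℕ) : ℝ)) ∧
      (1 - 1 / ((p : ℕ) : ℝ)) ^ 2 * (1 + 2 / ((p : ℕ) : ℝ)) ≤ 1 := fun p => by
    have hp : (2 : ℝ) ≤ (p : ℕ) := by exact_mod_cast p.2.two_le
    have hx1 : 1 / ((p : ℕ) : ℝ) ≤ 1 / 2 := by gcongr
    set x := 1 / ((p : ℕ) : ℝ)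
    have hx0 : 0 ≤ x := by positivity
    rw [show 2 / ((p : ℕ) : ℝ) = 2 * x by ring]
    constructor <;> nlinarith [mul_nonneg (sq_nonneg x) hx0]
  have h23 : (⟨2, Nat.prime_two⟩ : Nat.Primes) ≠ ⟨3, Nat.prime_three⟩ := by decide
  refine (tprod_le_prod_of_nonneg_of_le_one (fun p => (hfactor p).1) (fun p => (hfactor p).2)
    ({⟨2, Nat.prime_two⟩, ⟨3, Nat.prime_three⟩} : Finset Nat.Primes)).trans_eq ?_
  refine (prod_pair h23).trans ?_
  norm_num

lemma natLog_two_add_one_le_three_mul_log {H : ℕ} (hH : 2 ≤ H) :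
    (Nat.log 2 H : ℝ) + 1 ≤ 3 * Real.log H := by
  have hH' : (2 : ℝ) ≤ H := by exact_mod_cast hH
  have hlog : (Nat.log 2 H : ℝ) * Real.log 2 ≤ Real.log H := by
    rw [← Real.log_pow]
    exact Real.log_le_log (by positivity) (by exact_mod_cast Nat.pow_log_le_self 2 (by omega))
  have hl2 := Real.log_two_gt_d9
  have hmono : Real.log 2 ≤ Real.log H := Real.log_le_log (by norm_num) hH'
  nlinarith [(Nat.log 2 H).cast_nonneg (α := ℝ)]

end

lemma Dcount_two_le_real {H : ℕ} (hH : 1 ≤ H) :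
    (Dcount 2 H : ℝ) ≤ 8 * H ^ 3 * (17 / 27) + 224 * H ^ 2 * (1 + Real.log H)
      + 24 * H * (Nat.log 2 H + 1) ^ 2 * (H + 1) := by
  set P := Nat.primesBelow (H + 1)
  set L := Nat.log 2 H
  have hcard : (#P : ℝ) ≤ H + 1 := by exact_mod_cast card_primesBelow_le (H + 1)
  calc (Dcount 2 H : ℝ) ≤ ∑ p ∈ P, 2 * (#(dumasTriples p H L) : ℝ) := by
        exact_mod_cast Dcount_two_le_sum_card_dumasTriples H
    _ ≤ ∑ p ∈ P, 2 * (8 * H ^ 3 * ((p : ℝ) ^ 2 / ((p : ℝ) ^ 2 + p + 1) ^ 2) + 112 * H ^ 2 / p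
          + 12 * H * (L + 1) ^ 2) :=
        sum_le_sum fun p hp => by
          gcongr
          exact card_dumasTriples_le (Nat.prime_of_mem_primesBelow hp).two_le hH L
    _ = 16 * H ^ 3 * ∑ p ∈ P, (p : ℝ) ^ 2 / ((p : ℝ) ^ 2 + p + 1) ^ 2
          + 224 * H ^ 2 * ∑ p ∈ P, (p : ℝ)⁻¹ + ∑ _p ∈ P, 24 * (H : ℝ) * (L + 1) ^ 2 := by
        rw [mul_sum, mul_sum, ← sum_add_distrib, ← sum_add_distrib]
        exact sum_congr rfl fun p _ => by ring
    _ ≤ 16 * H ^ 3 * (17 / 54) + 224 * H ^ 2 * (1 + Real.log H)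
          + 24 * H * (L + 1) ^ 2 * (H + 1) := by
        rw [sum_const, nsmul_eq_mul, mul_comm (#P : ℝ)]
        gcongr
        · exact sum_primesBelow_sq_div_le _
        · exact sum_primesBelow_inv_le H
    _ = _ := by ring

theorem stmt_7 :
    ∃ C : ℝ, 0 < C ∧ ∀ H : ℕ, 2 ≤ H →
      (Dcount 2 H : ℝ) ≤ (2 * (H : ℝ)) ^ 3 * (1 - primeProd)
        + C * (H : ℝ) ^ 2 * (Real.log H) ^ 2 := by
  refine ⟨1400, by norm_num, fun H hH => ?_⟩
  have hH' : (2 : ℝ) ≤ H := by exact_mod_cast hH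
  have hlog : 0.69 < Real.log H :=
    Real.log_two_gt_d9.trans_le (Real.log_le_log (by norm_num) hH') |>.trans' (by norm_num)
  have hL := natLog_two_add_one_le_three_mul_log hH
  have hmain : 8 * (H : ℝ) ^ 3 * (17 / 27) ≤ (2 * (H : ℝ)) ^ 3 * (1 - primeProd) := by
    nlinarith [primeProd_le, pow_pos (by linarith : (0 : ℝ) < H) 3]
  have herr : 224 * (H : ℝ) ^ 2 * (1 + Real.log H)
      + 24 * H * (Nat.log 2 H + 1) ^ 2 * (H + 1) ≤ 1400 * (H : ℝ) ^ 2 * Real.log H ^ 2 := by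
    have hL2 : ((Nat.log 2 H : ℝ) + 1) ^ 2 ≤ 9 * Real.log H ^ 2 := by
      nlinarith [(Nat.log 2 H).cast_nonneg (α := ℝ)]
    have h1 : 1 + Real.log H ≤ 4 * Real.log H ^ 2 := by nlinarith
    have h2 : 24 * H * (Nat.log 2 H + 1) ^ 2 * (H + 1)
        ≤ 24 * (H : ℝ) * (9 * Real.log H ^ 2) * (2 * H) := by
      gcongr; linarith
    have h3 : 224 * (H : ℝ) ^ 2 * (1 + Real.log H) ≤ 224 * (H : ℝ) ^ 2 * (4 * Real.log H ^ 2) := by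
      gcongr
    nlinarith [sq_nonneg ((H : ℝ) * Real.log H)]
  linarith [Dcount_two_le_real (by omega : 1 ≤ H)]
end

section
/- Let f = Σ_{i=0}^n A_i x^i ∈ ℤ[x] with A_0 A_n ≠ 0 and n ≥ 1. If the Newton diagram of f with respect to some prime p consists of precisely one segment containing no lattice points other than its endpoints, then f is irreducible over ℚ. -/
open Filter Polynomial Topology

/-!
Write `s = v_p(A_n) - v_p(A_0)` and measure the valuations of the coefficients of an integer
polynomial against lines of slope `s / n`. If `f = g * h` over `ℤ`, the lowest such line through
a point of `g` and the lowest through a point of `h` add up to the lowest through a point of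
`f`: at the rightmost lowest points `i` of `g` and `j` of `h`, the coefficient of `X ^ (i + j)`
in `g * h` has a single term of minimal valuation. By the hypothesis the lowest line for `f`
is the segment itself, and it passes through both `(0, v_p(A_0))` and `(n, v_p(A_n))`, which
split as sums over the constant and leading coefficients of `g` and `h`. This forces both
endpoints of the diagram of `g` onto one line of slope `s / n`, giving the lattice point
`(deg g, v_p(A_0) + v_p(g_{deg g}) - v_p(g_0))` strictly inside the segment. Gauss's lemma
brings a factorization over `ℚ` down to `ℤ`.
-/

theorem Finset.exists_mem_forall_le_and_forall_lt_of_lt {α β : Type*} [LinearOrder α]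
    [LinearOrder β] {s : Finset α} (hs : s.Nonempty) (f : α → β) :
    ∃ i ∈ s, (∀ j ∈ s, f i ≤ f j) ∧ ∀ j ∈ s, i < j → f i < f j := by
  obtain ⟨i, hi, hmin⟩ := s.exists_min_image (fun j => toLex (f j, OrderDual.toDual j)) hs
  refine ⟨i, hi, fun j hj => ?_, fun j hj hij => ?_⟩
  · exact (Prod.Lex.le_iff.mp (hmin j hj)).elim le_of_lt (fun h => h.1.le)
  · rcases Prod.Lex.le_iff.mp (hmin j hj) with h | ⟨h, hle⟩
    · exact h
    · exact absurd hij (not_lt.mpr hle)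

section Valuation

variable {p : ℕ} [Fact p.Prime]

theorem vp_mul {a b : ℤ} (ha : a ≠ 0) (hb : b ≠ 0) : vp p (a * b) = vp p a + vp p b := by
  simp only [vp, padicValInt.mul ha hb, Nat.cast_add]

theorem vp_add_sum_eq {ι : Type*} {x : ℤ} (hx : x ≠ 0) (s : Finset ι) (y : ι → ℤ)
    (hy : ∀ k ∈ s, y k ≠ 0 → vp p x < vp p (y k)) :
    x + ∑ k ∈ s, y k ≠ 0 ∧ vp p (x + ∑ k ∈ s, y k) = vp p x := by
  set w := padicValInt p x
  have hsum : (p : ℤ) ^ (w + 1) ∣ ∑ k ∈ s, y k := by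
    refine Finset.dvd_sum fun k hk => (padicValInt_dvd_iff _ _).mpr ?_
    by_cases hyk : y k = 0
    · exact Or.inl hyk
    · have := hy k hk hyk
      simp only [vp] at this
      omega
  have hnot : ¬ (p : ℤ) ^ (w + 1) ∣ x + ∑ k ∈ s, y k := fun h => by
    rcases (padicValInt_dvd_iff _ _).mp ((dvd_add_left hsum).mp h) with h | h
    · exact hx h
    · omega
  have hne : x + ∑ k ∈ s, y k ≠ 0 := fun h => hnot (h ▸ dvd_zero _)
  refine ⟨hne, ?_⟩
  have hdvd : (p : ℤ) ^ w ∣ x + ∑ k ∈ s, y k :=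
    dvd_add (padicValInt_dvd x) ((pow_dvd_pow _ w.le_succ).trans hsum)
  have hle := ((padicValInt_dvd_iff w _).mp hdvd).resolve_left hne
  have hlt : ¬ w + 1 ≤ padicValInt p (x + ∑ k ∈ s, y k) := fun h =>
    hnot ((padicValInt_dvd_iff _ _).mpr (Or.inr h))
  simp only [vp]
  omega

end Valuation

namespace Polynomial

/-- `n` times the height of the point `(j, v_p(q_j))` above the line of slope `s / n` through
the origin. -/
noncomputable def tiltedVal (p : ℕ) (n s : ℤ) (q : ℤ[X]) (j : ℕ) : ℤ :=
  n * vp p (q.coeff j) - j * s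

section TiltedVal

open Finset.HasAntidiagonal

variable {p : ℕ} [Fact p.Prime] {n s : ℤ} {g h : ℤ[X]}

theorem tiltedVal_coeff_mul_of_rightmost_min (hn : 0 < n) {i j : ℕ} (hi : i ∈ g.support)
    (hj : j ∈ h.support)
    (hg_le : ∀ a ∈ g.support, tiltedVal p n s g i ≤ tiltedVal p n s g a)
    (hg_lt : ∀ a ∈ g.support, i < a → tiltedVal p n s g i < tiltedVal p n s g a)
    (hh_le : ∀ b ∈ h.support, tiltedVal p n s h j ≤ tiltedVal p n s h b)
    (hh_lt : ∀ b ∈ h.support, j < b → tiltedVal p n s h j < tiltedVal p n s h b) :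
    i + j ∈ (g * h).support ∧
      tiltedVal p n s (g * h) (i + j) = tiltedVal p n s g i + tiltedVal p n s h j := by
  rw [mem_support_iff] at hi hj
  have hcoeff : (g * h).coeff (i + j) = g.coeff i * h.coeff j +
      ∑ x ∈ (antidiagonal (i + j)).erase (i, j), g.coeff x.1 * h.coeff x.2 := by
    rw [coeff_mul]
    exact (Finset.add_sum_erase _ (fun x => g.coeff x.1 * h.coeff x.2)
      (mem_antidiagonal.mpr (rfl : (i, j).1 + (i, j).2 = i + j))).symm
  obtain ⟨hne, hval⟩ := vp_add_sum_eq (p := p) (mul_ne_zero hi hj)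
    ((antidiagonal (i + j)).erase (i, j)) (fun x => g.coeff x.1 * h.coeff x.2) <| by
    rintro ⟨a, b⟩ hx hab0
    obtain ⟨hab_ne, hab⟩ := Finset.mem_erase.mp hx
    rw [mem_antidiagonal] at hab
    dsimp only at hab0 hab ⊢
    obtain ⟨ha, hb⟩ := mul_ne_zero_iff.mp hab0
    have hlt : tiltedVal p n s g i + tiltedVal p n s h j <
        tiltedVal p n s g a + tiltedVal p n s h b := by
      rcases lt_trichotomy a i with hai | rfl | hia
      · exact add_lt_add_of_le_of_lt (hg_le a (mem_support_iff.mpr ha))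
          (hh_lt b (mem_support_iff.mpr hb) (by omega))
      · exact (hab_ne (Prod.ext rfl (by dsimp only; omega))).elim
      · exact add_lt_add_of_lt_of_le (hg_lt a (mem_support_iff.mpr ha) hia)
          (hh_le b (mem_support_iff.mpr hb))
    have habZ : (a : ℤ) + b = i + j := by exact_mod_cast hab
    simp only [tiltedVal] at hlt
    rw [vp_mul hi hj, vp_mul ha hb]
    refine lt_of_mul_lt_mul_left ?_ hn.le
    linear_combination hlt - s * habZ
  rw [mem_support_iff]
  refine ⟨hcoeff ▸ hne, ?_⟩
  simp only [tiltedVal, hcoeff, hval, vp_mul hi hj]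
  push_cast
  ring

theorem le_tiltedVal_add_of_forall_le_tiltedVal_mul (hn : 0 < n) {c : ℤ}
    (hc : ∀ k ∈ (g * h).support, c ≤ tiltedVal p n s (g * h) k) {i j : ℕ} (hi : i ∈ g.support)
    (hj : j ∈ h.support) : c ≤ tiltedVal p n s g i + tiltedVal p n s h j := by
  obtain ⟨i₀, hi₀, hg_le, hg_lt⟩ :=
    g.support.exists_mem_forall_le_and_forall_lt_of_lt ⟨i, hi⟩ (tiltedVal p n s g)
  obtain ⟨j₀, hj₀, hh_le, hh_lt⟩ :=
    h.support.exists_mem_forall_le_and_forall_lt_of_lt ⟨j, hj⟩ (tiltedVal p n s h)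
  obtain ⟨hmem, heq⟩ := tiltedVal_coeff_mul_of_rightmost_min hn hi₀ hj₀ hg_le hg_lt hh_le hh_lt
  calc c ≤ tiltedVal p n s (g * h) (i₀ + j₀) := hc _ hmem
    _ = tiltedVal p n s g i₀ + tiltedVal p n s h j₀ := heq
    _ ≤ tiltedVal p n s g i + tiltedVal p n s h j := add_le_add (hg_le i hi) (hh_le j hj)

end TiltedVal

theorem coeff_sum_range_C_mul_X_pow {R : Type*} [Semiring R] (A : ℕ → R) (n k : ℕ) :
    (∑ i ∈ Finset.range (n + 1), C (A i) * X ^ i).coeff k = if k ≤ n then A k else 0 := by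
  simp [finsetSum_coeff]

theorem natDegree_sum_range_C_mul_X_pow {R : Type*} [Semiring R] {A : ℕ → R} {n : ℕ}
    (hA : A n ≠ 0) : (∑ i ∈ Finset.range (n + 1), C (A i) * X ^ i).natDegree = n := by
  refine natDegree_eq_of_le_of_coeff_ne_zero ?_
    (by rwa [coeff_sum_range_C_mul_X_pow, if_pos le_rfl])
  refine natDegree_le_iff_coeff_eq_zero.mpr fun k hk => ?_
  rw [coeff_sum_range_C_mul_X_pow, if_neg (by omega)]

theorem IsPrimitive.isUnit_of_natDegree_eq_zero {R : Type*} [CommSemiring R] {f : R[X]}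
    (hf : f.IsPrimitive) (hdeg : f.natDegree = 0) : IsUnit f := by
  rw [eq_C_of_natDegree_eq_zero hdeg] at hf ⊢
  exact isUnit_C.mpr (hf _ dvd_rfl)

theorem irreducible_map_cast_of_forall_mul_eq {f : ℤ[X]} (hf : 0 < f.natDegree)
    (hfac : ∀ g h : ℤ[X], f = g * h → g.natDegree = 0 ∨ h.natDegree = 0) :
    Irreducible (f.map (Int.castRingHom ℚ)) := by
  have hc : f.content ≠ 0 := by
    rw [Ne, content_eq_zero_iff]
    rintro rfl
    simp at hf
  have hprim := f.isPrimitive_primPart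
  have hirr : Irreducible f.primPart := by
    refine ⟨fun hu => ?_, fun a b hab => ?_⟩
    · have := natDegree_eq_zero_of_isUnit hu
      rw [natDegree_primPart] at this
      omega
    · have hdeg := hfac (C f.content * a) b (by rw [mul_assoc, ← hab, ← eq_C_content_mul_primPart])
      rw [natDegree_C_mul hc] at hdeg
      exact hdeg.imp
        (isPrimitive_of_dvd hprim (hab ▸ dvd_mul_right a b)).isUnit_of_natDegree_eq_zero
        (isPrimitive_of_dvd hprim (hab ▸ dvd_mul_left b a)).isUnit_of_natDegree_eq_zero
  rw [f.eq_C_content_mul_primPart, Polynomial.map_mul, map_C]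
  refine (irreducible_isUnit_mul (isUnit_C.mpr ?_)).mpr
    ((IsPrimitive.Int.irreducible_iff_irreducible_map_cast hprim).mp hirr)
  exact isUnit_iff_ne_zero.mpr (by simpa using hc)

end Polynomial

theorem DumasAt.le_vp_sub_mul {p n : ℕ} {A : ℕ → ℤ} (hd : DumasAt p n A) {k : ℕ} (hk : k ≤ n)
    (hAk : A k ≠ 0) : n * vp p (A 0) ≤ n * vp p (A k) - k * (vp p (A n) - vp p (A 0)) := by
  rcases Nat.eq_zero_or_pos k with rfl | hk0
  · simp
  rcases hk.lt_or_eq with hkn | rfl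
  · linarith [hd.2.2.1 k hk0 hkn hAk]
  · exact le_of_eq (by ring)

open Polynomial in
theorem DumasAt.natDegree_eq_zero_or_natDegree_eq_zero {p n : ℕ} {A : ℕ → ℤ} (hp : p.Prime)
    (hd : DumasAt p n A) {g h : ℤ[X]}
    (hgh : g * h = ∑ i ∈ Finset.range (n + 1), C (A i) * X ^ i) :
    g.natDegree = 0 ∨ h.natDegree = 0 := by
  have : Fact p.Prime := ⟨hp⟩
  have ⟨hA0, hAn, _, hno_lattice⟩ := hd
  have hcoeff : ∀ k ≤ n, (g * h).coeff k = A k := fun k hk => by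
    rw [hgh, coeff_sum_range_C_mul_X_pow, if_pos hk]
  have hdeg : (g * h).natDegree = n := hgh ▸ natDegree_sum_range_C_mul_X_pow hAn
  have hg : g ≠ 0 := fun hg => hAn (by rw [← hcoeff n le_rfl, hg, zero_mul, coeff_zero])
  have hh : h ≠ 0 := fun hh => hAn (by rw [← hcoeff n le_rfl, hh, mul_zero, coeff_zero])
  set r := g.natDegree
  set m := h.natDegree
  have hrm : r + m = n := by rw [← natDegree_mul hg hh, hdeg]
  have hconst : g.coeff 0 * h.coeff 0 = A 0 := by rw [← mul_coeff_zero, hcoeff 0 n.zero_le]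
  have hlead : g.coeff r * h.coeff m = A n := by
    rw [← hcoeff n le_rfl, ← hrm, coeff_mul_degree_add_degree]; rfl
  obtain ⟨hg0, hh0⟩ := mul_ne_zero_iff.mp (hconst ▸ hA0)
  obtain ⟨hgr, hhm⟩ := mul_ne_zero_iff.mp (hlead ▸ hAn)
  by_contra! hpos
  have hn : (0 : ℤ) < n := by omega
  set s := vp p (A n) - vp p (A 0)
  set c := (n : ℤ) * vp p (A 0)
  have hc : ∀ k ∈ (g * h).support, c ≤ tiltedVal p n s (g * h) k := by
    intro k hk
    have hkn : k ≤ n := hdeg ▸ le_natDegree_of_mem_supp k hk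
    rw [tiltedVal, hcoeff k hkn]
    exact hd.le_vp_sub_mul hkn (hcoeff k hkn ▸ mem_support_iff.mp hk)
  have hT0 : tiltedVal p n s g 0 + tiltedVal p n s h 0 = c := by
    simp only [tiltedVal, c, ← hconst, vp_mul hg0 hh0]
    ring
  have hTn : tiltedVal p n s g r + tiltedVal p n s h m = c := by
    simp only [tiltedVal, c, s, ← hlead, vp_mul hgr hhm]
    push_cast [← hrm]
    ring
  have h1 := le_tiltedVal_add_of_forall_le_tiltedVal_mul hn hc
    (mem_support_iff.mpr hg0) (mem_support_iff.mpr hhm)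
  have h2 := le_tiltedVal_add_of_forall_le_tiltedVal_mul hn hc
    (mem_support_iff.mpr hgr) (mem_support_iff.mpr hh0)
  have hflat : tiltedVal p n s g r = tiltedVal p n s g 0 := by linarith
  refine hno_lattice ⟨r, vp p (g.coeff r) - vp p (g.coeff 0) + vp p (A 0), by omega, by omega, ?_⟩
  simp only [tiltedVal] at hflat
  linear_combination hflat

theorem stmt_17_general (n : ℕ) (hn : 1 ≤ n) (A : ℕ → ℤ)
    (p : ℕ) (hp : p.Prime) (hd : DumasAt p n A) :
    Irreducible (∑ i ∈ Finset.range (n + 1), Polynomial.C ((A i : ℚ)) * Polynomial.X ^ i) := by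
  have hmap : ∑ i ∈ Finset.range (n + 1), C ((A i : ℚ)) * X ^ i =
      (∑ i ∈ Finset.range (n + 1), C (A i) * X ^ i).map (Int.castRingHom ℚ) := by
    simp [Polynomial.map_sum]
  rw [hmap]
  refine irreducible_map_cast_of_forall_mul_eq ?_ fun g h hgh =>
    hd.natDegree_eq_zero_or_natDegree_eq_zero hp hgh.symm
  rwa [natDegree_sum_range_C_mul_X_pow hd.2.1]

theorem stmt_17 (n : ℕ) (hn : 1 ≤ n) (A : ℕ → ℤ) (h0 : A 0 ≠ 0) (hn0 : A n ≠ 0)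
    (p : ℕ) (hp : p.Prime) (hd : DumasAt p n A) :
    Irreducible (∑ i ∈ Finset.range (n + 1), Polynomial.C ((A i : ℚ)) * Polynomial.X ^ i) :=
  stmt_17_general n hn A p hp hd
end
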